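/- arXiv:1412.4221 — 2 statements merged into one kernel-verified Lean document; each statement's English description precedes it below -/
import Mathlib

section
/- Let n, s, m be positive integers with m < ns, and let C' be a real number greater than 1/2. If m/s ≥ (√(C' + 1/16) + 3/4)/(C' − 1/2), then for every m-dimensional F₂-linear subspace 𝒫 of M_{s,n}(F₂) one has WAFOM(𝒫) ≥ 2^{−C'·m²/s}. -/
open scoped BigOperators

/-- The Dick weight of an `s × n` matrix over `𝔽₂`: `μ(X) = ∑_{i,j} j · x_{i,j}`
(with columns indexed `1, …, n`, i.e. column `j : Fin n` contributes `j+1`). -/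
def dick {s n : ℕ} (X : Matrix (Fin s) (Fin n) (ZMod 2)) : ℕ :=
  ∑ i : Fin s, ∑ j : Fin n, if X i j = 1 then (j : ℕ) + 1 else 0

/-- The orthogonal complement of a subspace of `M_{s,n}(𝔽₂)` with respect to the
inner product `A · B = ∑_{i,j} a_{i,j} b_{i,j}`. -/
def ortho {s n : ℕ} (P : Submodule (ZMod 2) (Matrix (Fin s) (Fin n) (ZMod 2))) :
    Submodule (ZMod 2) (Matrix (Fin s) (Fin n) (ZMod 2)) where
  carrier := {X | ∀ A ∈ P, ∑ i : Fin s, ∑ j : Fin n, A i j * X i j = 0}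
  zero_mem' := by intro A _; simp
  add_mem' := by
    intro X Y hX hY A hA
    have h1 := hX A hA
    have h2 := hY A hA
    calc (∑ i : Fin s, ∑ j : Fin n, A i j * (X + Y) i j)
        = (∑ i : Fin s, ∑ j : Fin n, A i j * X i j)
          + ∑ i : Fin s, ∑ j : Fin n, A i j * Y i j := by
          simp [Matrix.add_apply, mul_add, Finset.sum_add_distrib]
      _ = 0 := by rw [h1, h2, add_zero]
  smul_mem' := by
    intro c X hX A hA
    have h := hX A hA
    calc (∑ i : Fin s, ∑ j : Fin n, A i j * (c • X) i j)
        = c * ∑ i : Fin s, ∑ j : Fin n, A i j * X i j := by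
          simp [Matrix.smul_apply, smul_eq_mul, Finset.mul_sum, mul_left_comm]
      _ = 0 := by rw [h, mul_zero]

-- WAFOM of a subspace `P` of `M_{s,n}(𝔽₂)`: `∑_{X ∈ P^⊥ \ {O}} 2^{-μ(X)}`.
open Classical in
noncomputable def wafom {s n : ℕ}
    (P : Submodule (ZMod 2) (Matrix (Fin s) (Fin n) (ZMod 2))) : ℝ :=
  ∑ X : Matrix (Fin s) (Fin n) (ZMod 2),
    if X ∈ ortho P ∧ X ≠ 0 then (2 : ℝ) ^ (-(dick X : ℤ)) else 0

/-- The minimum Dick weight of `P^⊥`: `δ = min_{X ∈ P^⊥ \ {O}} μ(X)`. -/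
noncomputable def minWeight {s n : ℕ}
    (P : Submodule (ZMod 2) (Matrix (Fin s) (Fin n) (ZMod 2))) : ℕ :=
  sInf {k | ∃ X ∈ ortho P, X ≠ 0 ∧ dick X = k}

/-!
Let `t = ⌊m/s⌋ + 1 ≤ n`. The matrices supported on the first `t` columns form a space of
dimension `st > m = dim 𝒫`, so they meet `𝒫^⊥`, the kernel of `X ↦ (A ↦ A · X)` restricted to
`𝒫`, nontrivially. A nonzero `X` in the intersection has `μ(X) ≤ s·t(t+1)/2` and contributes
`2^{-μ(X)}` to WAFOM(𝒫). Since `t ≤ m/s + 1`, the hypothesis on `m/s`, which places it beyond the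
larger root of `(C' - 1/2)x² - (3/2)x - 1`, gives `s·t(t+1)/2 ≤ C'm²/s`.
-/

open Module

theorem LinearMap.BilinForm.exists_ne_zero_map_mem_orthogonal {K V W : Type*} [Field K]
    [AddCommGroup V] [Module K V] [AddCommGroup W] [Module K W] [FiniteDimensional K W]
    (B : LinearMap.BilinForm K V) (P : Submodule K V) [FiniteDimensional K P] (ψ : W →ₗ[K] V)
    (h : finrank K P < finrank K W) : ∃ w ≠ 0, ψ w ∈ B.orthogonal P := by
  let Φ : W →ₗ[K] Dual K P := LinearMap.lcomp K K P.subtype ∘ₗ B.flip ∘ₗ ψ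
  have hker : LinearMap.ker Φ ≠ ⊥ :=
    LinearMap.ker_ne_bot_of_finrank_lt (by rwa [Subspace.dual_finrank_eq])
  obtain ⟨w, hw, hw0⟩ := Submodule.exists_mem_ne_zero_of_ne_bot hker
  exact ⟨w, hw0, fun A hA => LinearMap.congr_fun hw ⟨A, hA⟩⟩

def Matrix.frobeniusForm (K m n : Type*) [CommSemiring K] [Fintype m] [Fintype n] :
    LinearMap.BilinForm K (Matrix m n K) :=
  LinearMap.mk₂ K (fun A X => ∑ i, ∑ j, A i j * X i j)
    (by intros; simp only [Matrix.add_apply, add_mul, Finset.sum_add_distrib])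
    (by intros; simp only [Matrix.smul_apply, smul_eq_mul, Finset.mul_sum, mul_assoc])
    (by intros; simp only [Matrix.add_apply, mul_add, Finset.sum_add_distrib])
    (by intros; simp only [Matrix.smul_apply, smul_eq_mul, Finset.mul_sum, mul_left_comm])

theorem ortho_eq_orthogonal {s n : ℕ} (P : Submodule (ZMod 2) (Matrix (Fin s) (Fin n) (ZMod 2))) :
    ortho P = (Matrix.frobeniusForm (ZMod 2) (Fin s) (Fin n)).orthogonal P :=
  rfl

noncomputable def Matrix.extendColsByZero (K m : Type*) [Semiring K] {t n : ℕ} (h : t ≤ n) :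
    Matrix m (Fin t) K →ₗ[K] Matrix m (Fin n) K :=
  (Function.ExtendByZero.linearMap K (Fin.castLE h)).compLeft m

theorem Matrix.extendColsByZero_apply {K m : Type*} [Semiring K] {t n : ℕ} (h : t ≤ n)
    (Y : Matrix m (Fin t) K) (i : m) :
    Matrix.extendColsByZero K m h Y i = Function.extend (Fin.castLE h) (Y i) 0 :=
  rfl

theorem Matrix.extendColsByZero_injective {K m : Type*} [Semiring K] {t n : ℕ} (h : t ≤ n) :
    Function.Injective (Matrix.extendColsByZero K m h) := fun Y Z hYZ =>
  funext fun i => Function.extend_injective (Fin.castLE_injective h) 0 <| by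
    simpa only [Matrix.extendColsByZero_apply] using congrFun hYZ i

theorem Matrix.extendColsByZero_apply_of_le {K m : Type*} [Semiring K] {t n : ℕ} (h : t ≤ n)
    (Y : Matrix m (Fin t) K) (i : m) {j : Fin n} (hj : t ≤ j) :
    Matrix.extendColsByZero K m h Y i j = 0 := by
  rw [Matrix.extendColsByZero_apply, Function.extend_apply']
  · rfl
  · rintro ⟨a, rfl⟩
    rw [Fin.val_castLE] at hj
    exact hj.not_gt a.isLt

theorem two_mul_sum_range_add_one (t : ℕ) : 2 * ∑ j ∈ Finset.range t, (j + 1) = t * (t + 1) := by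
  induction t with
  | zero => rfl
  | succ t ih => rw [Finset.sum_range_succ, mul_add, ih]; ring

theorem two_mul_dick_le {s n t : ℕ} (X : Matrix (Fin s) (Fin n) (ZMod 2))
    (hX : ∀ (i : Fin s) (j : Fin n), t ≤ j → X i j = 0) : 2 * dick X ≤ s * (t * (t + 1)) := by
  have hrow : ∀ i, (∑ j : Fin n, if X i j = 1 then (j : ℕ) + 1 else 0) ≤
      ∑ j ∈ Finset.range t, (j + 1) := fun i =>
    calc (∑ j : Fin n, if X i j = 1 then (j : ℕ) + 1 else 0)
        ≤ ∑ j : Fin n, if (j : ℕ) < t then (j : ℕ) + 1 else 0 := by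
          gcongr with j
          by_cases hj : (j : ℕ) < t
          · simp only [hj, if_true]
            split <;> omega
          · simp [hX i j (not_lt.1 hj)]
      _ = ∑ j ∈ (Finset.range n).filter (· < t), (j + 1) := by
          rw [Finset.sum_filter, Fin.sum_univ_eq_sum_range (fun j => if j < t then j + 1 else 0)]
      _ ≤ ∑ j ∈ Finset.range t, (j + 1) := by
          gcongr
          intro j
          simp only [Finset.mem_filter, Finset.mem_range]
          exact And.right
  calc 2 * dick X ≤ 2 * ∑ _i : Fin s, ∑ j ∈ Finset.range t, (j + 1) := by
        unfold dick
        gcongr with i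
        exact hrow i
    _ = s * (t * (t + 1)) := by
        rw [Finset.sum_const, Finset.card_univ, Fintype.card_fin, smul_eq_mul, mul_left_comm,
          two_mul_sum_range_add_one]

theorem two_rpow_neg_le_wafom {s n : ℕ} {P : Submodule (ZMod 2) (Matrix (Fin s) (Fin n) (ZMod 2))}
    {X : Matrix (Fin s) (Fin n) (ZMod 2)} (hX : X ∈ ortho P) (hX0 : X ≠ 0) {c : ℝ}
    (hc : (dick X : ℝ) ≤ c) : (2 : ℝ) ^ (-c) ≤ wafom P :=
  calc (2 : ℝ) ^ (-c) ≤ (2 : ℝ) ^ (-(dick X : ℝ)) :=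
        Real.rpow_le_rpow_of_exponent_le one_le_two (neg_le_neg hc)
    _ = (2 : ℝ) ^ (-(dick X : ℤ)) := by rw [← Real.rpow_intCast]; push_cast; rfl
    _ ≤ wafom P := by
        unfold wafom
        refine le_of_eq_of_le ?_ (Finset.single_le_sum (fun Y _ => ?_) (Finset.mem_univ X))
        · simp [hX, hX0]
        · positivity

theorem mul_add_one_le_two_mul_sq {C r t : ℝ} (hC : 1 / 2 < C)
    (hr : (Real.sqrt (C + 1 / 16) + 3 / 4) / (C - 1 / 2) ≤ r) (ht : 0 ≤ t) (htr : t ≤ r + 1) :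
    t * (t + 1) ≤ 2 * C * r ^ 2 := by
  set q := Real.sqrt (C + 1 / 16)
  have hq : q ^ 2 = C + 1 / 16 := Real.sq_sqrt (by linarith)
  have ha : 0 < C - 1 / 2 := by linarith
  have hqr : q + 3 / 4 ≤ (C - 1 / 2) * r := by rwa [div_le_iff₀' ha] at hr
  -- The roots of `(C - 1/2) x² - (3/2) x - 1` are `(3/4 ± q) / (C - 1/2)`.
  have hroot : 0 ≤ ((C - 1 / 2) * r - (q + 3 / 4)) * ((C - 1 / 2) * r + q - 3 / 4) :=
    mul_nonneg (by linarith) (by linarith [Real.sqrt_nonneg (C + 1 / 16)])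
  calc t * (t + 1) ≤ (r + 1) * (r + 2) := mul_le_mul htr (by linarith) (by positivity) (by linarith)
    _ ≤ 2 * C * r ^ 2 := by nlinarith

theorem wafom_lower_bound_general (n s m : ℕ) (hs : 0 < s)
    (hmns : m < n * s) (C' : ℝ) (hC' : 1 / 2 < C')
    (hratio : (m : ℝ) / s ≥ (Real.sqrt (C' + 1 / 16) + 3 / 4) / (C' - 1 / 2))
    (P : Submodule (ZMod 2) (Matrix (Fin s) (Fin n) (ZMod 2)))
    (hdim : Module.finrank (ZMod 2) P = m) :
    wafom P ≥ (2 : ℝ) ^ (-(C' * (m : ℝ) ^ 2 / (s : ℝ))) := by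
  set t := m / s + 1
  have htn : t ≤ n := (Nat.div_lt_iff_lt_mul hs).2 hmns
  have hdim_lt : finrank (ZMod 2) P < finrank (ZMod 2) (Matrix (Fin s) (Fin t) (ZMod 2)) := by
    rw [hdim, finrank_matrix, finrank_self, Fintype.card_fin, Fintype.card_fin, mul_one]
    exact Nat.lt_mul_div_succ m hs
  let ψ := Matrix.extendColsByZero (ZMod 2) (Fin s) htn
  obtain ⟨Y, hY0, hYP⟩ :=
    (Matrix.frobeniusForm (ZMod 2) (Fin s) (Fin n)).exists_ne_zero_map_mem_orthogonal P ψ hdim_lt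
  have hψY : ψ Y ≠ 0 := (map_ne_zero_iff ψ (Matrix.extendColsByZero_injective htn)).2 hY0
  have hdick := two_mul_dick_le (ψ Y) fun i j => Matrix.extendColsByZero_apply_of_le htn Y i
  have htr : (t : ℝ) ≤ m / s + 1 := by
    simpa [t] using (Nat.cast_div_le : ((m / s : ℕ) : ℝ) ≤ m / s)
  refine two_rpow_neg_le_wafom (ortho_eq_orthogonal P ▸ hYP) hψY ?_
  calc (dick (ψ Y) : ℝ) ≤ s * (t * (t + 1)) / 2 := by
        rw [le_div_iff₀ two_pos]; exact_mod_cast (mul_comm _ _).trans_le hdick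
    _ ≤ s * (2 * C' * (m / s) ^ 2) / 2 := by
        gcongr s * ?_ / 2
        exact mul_add_one_le_two_mul_sq hC' hratio (Nat.cast_nonneg t) htr
    _ = C' * m ^ 2 / s := by field_simp

/-- A lower bound on WAFOM (Theorem 3.1): for `C' > 1/2` and
`m/s ≥ (√(C'+1/16)+3/4)/(C'-1/2)`, every `m`-dimensional subspace `P` of
`M_{s,n}(𝔽₂)` satisfies `WAFOM(P) ≥ 2^{-C'm²/s}`. -/
theorem wafom_lower_bound (n s m : ℕ) (hn : 0 < n) (hs : 0 < s) (hm : 0 < m)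
    (hmns : m < n * s) (C' : ℝ) (hC' : 1 / 2 < C')
    (hratio : (m : ℝ) / s ≥ (Real.sqrt (C' + 1 / 16) + 3 / 4) / (C' - 1 / 2))
    (P : Submodule (ZMod 2) (Matrix (Fin s) (Fin n) (ZMod 2)))
    (hdim : Module.finrank (ZMod 2) P = m) :
    wafom P ≥ (2 : ℝ) ^ (-(C' * (m : ℝ) ^ 2 / (s : ℝ))) :=
  wafom_lower_bound_general n s m hs hmns C' hC' hratio P hdim
end

section
/- Let n, s, m be positive integers with m < ns, and let q, r be non-negative integers with m = sq + r and r < s. Then for every m-dimensional F₂-linear subspace 𝒫 of M_{s,n}(F₂), the minimum Dick weight of 𝒫^⊥ satisfies δ_{𝒫^⊥} ≤ sq(q+1)/2 + (q+1)(r+1). -/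
open scoped BigOperators

/-! `P^⊥` is cut out by `m = dim P` linear conditions, so it meets every `(m + 1)`-dimensional
space of matrices nontrivially. Taking the matrices supported on the first `m + 1` positions in
column-major order (the first `q` columns and the top `r + 1` entries of column `q + 1`) gives a
nonzero `X ∈ P^⊥` with `μ(X) ≤ s (1 + ⋯ + q) + (r + 1)(q + 1)`. -/

open Finset Module

theorem exists_ne_zero_forall_mem_eq_zero_of_finrank_lt {K U W : Type*} [Field K]
    [AddCommGroup U] [Module K U] [AddCommGroup W] [Module K W]
    (B : U →ₗ[K] W →ₗ[K] K) (P : Submodule K W) [FiniteDimensional K U]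
    [FiniteDimensional K P] (h : finrank K P < finrank K U) :
    ∃ u ≠ 0, ∀ w ∈ P, B u w = 0 := by
  have hker : LinearMap.ker (B.compl₂ P.subtype : U →ₗ[K] Dual K P) ≠ ⊥ :=
    LinearMap.ker_ne_bot_of_finrank_lt (by rwa [Subspace.dual_finrank_eq])
  obtain ⟨u, hu, hu0⟩ := Submodule.exists_mem_ne_zero_of_ne_bot hker
  exact ⟨u, hu0, fun w hw => LinearMap.congr_fun hu ⟨w, hw⟩⟩

namespace Matrix

variable {R ι κ : Type*}

def entrywisePairing [CommSemiring R] [Fintype ι] [Fintype κ] :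
    Matrix ι κ R →ₗ[R] Matrix ι κ R →ₗ[R] R :=
  LinearMap.mk₂ R (fun X A => ∑ i, ∑ j, A i j * X i j)
    (fun _ _ _ => by simp only [add_apply, mul_add, sum_add_distrib])
    (fun _ _ _ => by simp only [smul_apply, smul_eq_mul, mul_sum, mul_left_comm])
    (fun _ _ _ => by simp only [add_apply, add_mul, sum_add_distrib])
    (fun _ _ _ => by simp only [smul_apply, smul_eq_mul, mul_sum, mul_assoc])

section ExtendByZero

variable [Semiring R] [DecidableEq ι] [DecidableEq κ]

def extendByZero (S : Finset (ι × κ)) : (S → R) →ₗ[R] Matrix ι κ R where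
  toFun g := of fun i j => if h : (i, j) ∈ S then g ⟨(i, j), h⟩ else 0
  map_add' f g := by ext i j; simp only [of_apply, add_apply]; split_ifs <;> simp
  map_smul' c g := by ext i j; simp only [of_apply, smul_apply]; split_ifs <;> simp

theorem extendByZero_injective (S : Finset (ι × κ)) :
    Function.Injective (extendByZero (R := R) S) := fun f g hfg =>
  funext fun ⟨(i, j), h⟩ => by simpa [extendByZero, h] using congr_fun₂ hfg i j

theorem extendByZero_apply_of_notMem {S : Finset (ι × κ)} (g : S → R) {i : ι} {j : κ}
    (h : (i, j) ∉ S) : extendByZero S g i j = 0 :=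
  dif_neg h

end ExtendByZero

end Matrix

theorem mem_ortho_iff {s n : ℕ} {P : Submodule (ZMod 2) (Matrix (Fin s) (Fin n) (ZMod 2))}
    {X : Matrix (Fin s) (Fin n) (ZMod 2)} :
    X ∈ ortho P ↔ ∀ A ∈ P, Matrix.entrywisePairing X A = 0 :=
  Iff.rfl

theorem exists_mem_ortho_ne_zero_supported_of_finrank_lt_card {s n : ℕ}
    (P : Submodule (ZMod 2) (Matrix (Fin s) (Fin n) (ZMod 2))) (S : Finset (Fin s × Fin n))
    (h : finrank (ZMod 2) P < #S) :
    ∃ X ∈ ortho P, X ≠ 0 ∧ ∀ i j, (i, j) ∉ S → X i j = 0 := by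
  obtain ⟨g, hg, hgP⟩ := exists_ne_zero_forall_mem_eq_zero_of_finrank_lt
    (Matrix.entrywisePairing ∘ₗ Matrix.extendByZero S) P
    (by rwa [finrank_fintype_fun_eq_card, Fintype.card_coe])
  exact ⟨Matrix.extendByZero S g, mem_ortho_iff.2 hgP,
    (map_ne_zero_iff _ (Matrix.extendByZero_injective S)).2 hg,
    fun _ _ => Matrix.extendByZero_apply_of_notMem g⟩

theorem minWeight_le_dick {s n : ℕ} {P : Submodule (ZMod 2) (Matrix (Fin s) (Fin n) (ZMod 2))}
    {X : Matrix (Fin s) (Fin n) (ZMod 2)} (hXP : X ∈ ortho P) (hX : X ≠ 0) :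
    minWeight P ≤ dick X :=
  Nat.sInf_le ⟨X, hXP, hX, rfl⟩

theorem dick_le_sum_of_supported {s n : ℕ} {X : Matrix (Fin s) (Fin n) (ZMod 2)}
    {S : Finset (Fin s × Fin n)} (hX : ∀ i j, (i, j) ∉ S → X i j = 0) :
    dick X ≤ ∑ p ∈ S, ((p.2 : ℕ) + 1) := by
  have hsub : univ.filter (fun p : Fin s × Fin n => X p.1 p.2 = 1) ⊆ S := fun p hp => by
    by_contra hpS
    simp [hX p.1 p.2 hpS] at hp
  calc dick X = ∑ p ∈ univ.filter (fun p : Fin s × Fin n => X p.1 p.2 = 1), ((p.2 : ℕ) + 1) := by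
        rw [sum_filter, dick, Fintype.sum_prod_type]
    _ ≤ _ := sum_le_sum_of_subset hsub

/-- The first `s q + r + 1` positions in column-major order (for `q < n`, `r < s`). -/
def staircase (s n q r : ℕ) : Finset (Fin s × Fin n) :=
  {p | (p.2 : ℕ) < q ∨ ((p.2 : ℕ) = q ∧ (p.1 : ℕ) ≤ r)}

theorem sum_range_ite_lt_or_eq {M : Type*} [AddCommMonoid M] (f : ℕ → M) {n q : ℕ} (hq : q < n)
    (P : Prop) [Decidable P] :
    ∑ j ∈ range n, (if j < q ∨ (j = q ∧ P) then f j else 0) =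
      ∑ j ∈ range q, f j + if P then f q else 0 := by
  rw [← sum_filter]
  by_cases hP : P
  · have : {j ∈ range n | j < q ∨ (j = q ∧ P)} = range (q + 1) := by
      ext; simp only [mem_filter, mem_range, hP, and_true]; omega
    rw [this, sum_range_succ, if_pos hP]
  · have : {j ∈ range n | j < q ∨ (j = q ∧ P)} = range q := by
      ext; simp only [mem_filter, mem_range, hP, and_false, or_false]; omega
    rw [this, if_neg hP, add_zero]

theorem sum_staircase {M : Type*} [AddCommMonoid M] (f : ℕ → M) {s n q r : ℕ} (hq : q < n)
    (hr : r < s) :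
    ∑ p ∈ staircase s n q r, f p.2 = s • ∑ j ∈ range q, f j + (r + 1) • f q := by
  have hrow (i : Fin s) :
      ∑ j : Fin n, (if (j : ℕ) < q ∨ ((j : ℕ) = q ∧ (i : ℕ) ≤ r) then f j else 0) =
        ∑ j ∈ range q, f j + if (i : ℕ) ≤ r then f q else 0 :=
    (Fin.sum_univ_eq_sum_range (fun j => if j < q ∨ (j = q ∧ (i : ℕ) ≤ r) then f j else 0) n).trans
      (sum_range_ite_lt_or_eq f hq _)
  have hrows : #{i : Fin s | (i : ℕ) ≤ r} = r + 1 := by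
    simp only [← Nat.lt_succ_iff, Fin.card_filter_val_lt]; omega
  rw [staircase, sum_filter, Fintype.sum_prod_type]
  simp only [hrow, sum_add_distrib, sum_const, card_univ, Fintype.card_fin]
  rw [← sum_filter, sum_const, hrows]

theorem sum_range_add_one_mul_two (q : ℕ) : (∑ j ∈ range q, (j + 1)) * 2 = q * (q + 1) := by
  rw [← add_zero (∑ j ∈ range q, (j + 1)), ← sum_range_succ' (fun j => j), sum_range_id_mul_two,
    Nat.add_sub_cancel, mul_comm]

theorem minWeight_upper_bound_general (n s m q r : ℕ)
    (hmns : m < n * s) (hqr : m = s * q + r) (hr : r < s)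
    (P : Submodule (ZMod 2) (Matrix (Fin s) (Fin n) (ZMod 2)))
    (hdim : Module.finrank (ZMod 2) P = m) :
    (minWeight P : ℝ) ≤ (s : ℝ) * q * (q + 1) / 2 + (q + 1) * (r + 1) := by
  have hq : q < n := Nat.lt_of_mul_lt_mul_left (a := s) (by nlinarith)
  have hcard : #(staircase s n q r) = m + 1 := by
    rw [card_eq_sum_ones, sum_staircase (fun _ => 1) hq hr]
    simp [hqr, add_assoc]
  obtain ⟨X, hXP, hX0, hXS⟩ :=
    exists_mem_ortho_ne_zero_supported_of_finrank_lt_card P (staircase s n q r) (by omega)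
  have hweight := (minWeight_le_dick hXP hX0).trans (dick_le_sum_of_supported hXS)
  rw [sum_staircase (fun j => j + 1) hq hr, smul_eq_mul, smul_eq_mul] at hweight
  have h : minWeight P * 2 ≤ s * (q * (q + 1)) + (r + 1) * (q + 1) * 2 := by
    rw [← sum_range_add_one_mul_two]
    nlinarith
  have hR : ((minWeight P * 2 : ℕ) : ℝ) ≤ (s * (q * (q + 1)) + (r + 1) * (q + 1) * 2 : ℕ) :=
    Nat.cast_le.2 h
  push_cast at hR
  linarith

/-- Lemma 3.2 (a): if `m = sq + r` with `0 ≤ r < s`, then every `m`-dimensional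
subspace `P` of `M_{s,n}(𝔽₂)` satisfies `δ_{P^⊥} ≤ sq(q+1)/2 + (q+1)(r+1)`. -/
theorem minWeight_upper_bound (n s m q r : ℕ) (hn : 0 < n) (hs : 0 < s) (hm : 0 < m)
    (hmns : m < n * s) (hqr : m = s * q + r) (hr : r < s)
    (P : Submodule (ZMod 2) (Matrix (Fin s) (Fin n) (ZMod 2)))
    (hdim : Module.finrank (ZMod 2) P = m) :
    (minWeight P : ℝ) ≤ (s : ℝ) * q * (q + 1) / 2 + (q + 1) * (r + 1) :=
  minWeight_upper_bound_general n s m q r hmns hqr hr P hdim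
end
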